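/- For the Z-channel with correct-transmission probability P₁ ∈ (0,1) for input 1, the capacity-achieving input probability of input 1 is α* = 1/(P₁·(2^{H_b(P₁)/P₁} + 1)). -/

import Mathlib

open Real

/-- Binary entropy function (base 2). -/
noncomputable def H2 (x : ℝ) : ℝ :=
  -(x * Real.logb 2 x) - (1 - x) * Real.logb 2 (1 - x)

/-- Mutual information of the Z-channel (`W(0|0)=1`, `W(1|1)=P₁`) when the input is `1`
with probability `α`. -/
noncomputable def zMI (P₁ α : ℝ) : ℝ := H2 (α * P₁) - α * H2 P₁

/-!
Substituting `x = α P₁`, the mutual information becomes `H_b(x) - x log₂ c` with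
`c = 2^{H_b(P₁)/P₁}`. By Gibbs' inequality `H_b(t) ≤ -t log q - (1-t) log (1-q)`, and for
`q = 1/(c+1)` the right-hand side minus `t log c` does not depend on `t`; hence `H_b(t) - t log c`
is maximal at `t = 1/(c+1)`, i.e. at `α = α*`. That `α* ≤ 1` amounts to `log (1 - P₁) ≤ 0`.
-/

namespace Real

lemma mul_log_le_mul_log_add_sub {t q : ℝ} (ht : 0 ≤ t) (hq : 0 < q) :
    t * log q ≤ t * log t + (q - t) := by
  rcases ht.eq_or_lt with rfl | ht
  · simpa using hq.le
  calc t * log q = t * log t + t * log (q / t) := by rw [log_div hq.ne' ht.ne']; ring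
    _ ≤ t * log t + t * (q / t - 1) := by gcongr; exact log_le_sub_one_of_pos (by positivity)
    _ = t * log t + (q - t) := by field_simp

lemma binEntropy_le_neg_mul_log_sub_mul_log {t q : ℝ} (ht₀ : 0 ≤ t) (ht₁ : t ≤ 1)
    (hq₀ : 0 < q) (hq₁ : q < 1) :
    binEntropy t ≤ -(t * log q) - (1 - t) * log (1 - q) := by
  have h₀ := mul_log_le_mul_log_add_sub ht₀ hq₀
  have h₁ := mul_log_le_mul_log_add_sub (sub_nonneg.2 ht₁) (sub_pos.2 hq₁)
  rw [binEntropy_eq_negMulLog_add_negMulLog_one_sub, negMulLog, negMulLog]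
  linarith

lemma binEntropy_sub_mul_log_le {c t : ℝ} (hc : 0 < c) (ht₀ : 0 ≤ t) (ht₁ : t ≤ 1) :
    binEntropy t - t * log c ≤ binEntropy (c + 1)⁻¹ - (c + 1)⁻¹ * log c := by
  set q := (c + 1)⁻¹
  have hq₀ : 0 < q := by positivity
  have hq₁ : q < 1 := inv_lt_one_of_one_lt₀ (by linarith)
  have hlog : log (1 - q) = log q + log c := by
    rw [← log_mul hq₀.ne' hc.ne']
    congr 1
    simp only [q]
    field_simp
    ring
  have hgibbs := binEntropy_le_neg_mul_log_sub_mul_log ht₀ ht₁ hq₀ hq₁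
  simp only [binEntropy_eq_negMulLog_add_negMulLog_one_sub, negMulLog, hlog] at hgibbs ⊢
  linarith

end Real

lemma H2_eq_binEntropy_div_log_two (x : ℝ) : H2 x = binEntropy x / log 2 := by
  simp only [H2, binEntropy_eq_negMulLog_add_negMulLog_one_sub, negMulLog, logb]
  ring

lemma H2_sub_mul_logb_le {c t : ℝ} (hc : 0 < c) (ht₀ : 0 ≤ t) (ht₁ : t ≤ 1) :
    H2 t - t * logb 2 c ≤ H2 (c + 1)⁻¹ - (c + 1)⁻¹ * logb 2 c := by
  have hbits (s : ℝ) : H2 s - s * logb 2 c = (binEntropy s - s * log c) / log 2 := by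
    rw [H2_eq_binEntropy_div_log_two, logb]
    ring
  rw [hbits, hbits]
  exact div_le_div_of_nonneg_right (binEntropy_sub_mul_log_le hc ht₀ ht₁) (log_pos one_lt_two).le

lemma one_le_mul_rpow_H2_div_add_one {p : ℝ} (hp₀ : 0 < p) (hp₁ : p < 1) :
    1 ≤ p * ((2 : ℝ) ^ (H2 p / p) + 1) := by
  have hlog : logb 2 (1 - p) ≤ 0 := logb_nonpos one_lt_two (by linarith) (by linarith)
  have hlogb_le : logb 2 ((1 - p) / p) ≤ logb 2 ((2 : ℝ) ^ (H2 p / p)) := by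
    rw [logb_rpow two_pos (by norm_num), logb_div (by linarith) hp₀.ne', le_div_iff₀ hp₀, H2]
    nlinarith
  have hratio : (1 - p) / p ≤ (2 : ℝ) ^ (H2 p / p) :=
    (logb_le_logb one_lt_two (by positivity) (by positivity)).1 hlogb_le
  rw [div_le_iff₀ hp₀] at hratio
  linarith

/-- For the Z-channel with correct-transmission probability `P₁ ∈ (0,1)` for input `1`,
the capacity-achieving input probability of `1` is `α* = 1/(P₁ (2^{H_b(P₁)/P₁}+1))`. -/
theorem z_channel_argmax
    (P₁ : ℝ) (hP₁ : P₁ ∈ Set.Ioo (0 : ℝ) 1)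
    (αstar : ℝ) (hαstar : αstar = 1 / (P₁ * ((2 : ℝ) ^ (H2 P₁ / P₁) + 1))) :
    αstar ∈ Set.Icc (0 : ℝ) 1 ∧
      ∀ α ∈ Set.Icc (0 : ℝ) 1, zMI P₁ α ≤ zMI P₁ αstar := by
  obtain ⟨hP₀, hP₁⟩ := hP₁
  set c := (2 : ℝ) ^ (H2 P₁ / P₁) with hc_def
  have hc : 0 < c := by positivity
  have hzMI (β : ℝ) : zMI P₁ β = H2 (β * P₁) - β * P₁ * logb 2 c := by
    rw [zMI, hc_def, logb_rpow two_pos (by norm_num)]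
    field_simp
  have hαP : αstar * P₁ = (c + 1)⁻¹ := by
    rw [hαstar]
    field_simp
  refine ⟨⟨by rw [hαstar]; positivity, ?_⟩, fun α ⟨hα₀, hα₁⟩ ↦ ?_⟩
  · rw [hαstar, div_le_one (by positivity)]
    exact one_le_mul_rpow_H2_div_add_one hP₀ hP₁
  · rw [hzMI, hzMI, hαP]
    exact H2_sub_mul_logb_le hc (by positivity) (by nlinarith)
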